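/- arXiv:1108.3653 — 4 statements merged into one kernel-verified Lean document; each statement's English description precedes it below -/
import Mathlib

section
/- If C is a set of clusters on X and (x_1, ..., x_k) is a sequence of distinct taxa with k >= 2 such that x_i ->_C x_{i+1} for all 1 <= i <= k-1 and x_k ->_C x_1, then the set {x_1, ..., x_k} is compatible with C (every cluster in C either contains all of these taxa or is disjoint from their union, when restricted to non-singleton clusters containing any of them). -/
/-! A cluster of size at least 2 meeting the cycle is carried along it by the arrows, once
around and back to the start, so it contains the whole cycle; smaller clusters are compatible
with every set. -/

/-- `x →_C y`: every cluster in `C` of size at least 2 that contains `x` also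
contains `y`. -/
def Arrow {X : Type*} (C : Set (Set X)) (x y : X) : Prop :=
  ∀ c ∈ C, c.Nontrivial → x ∈ c → y ∈ c

/-- Two sets are compatible: one contains the other, or they are disjoint. -/
def Compat {X : Type*} (A B : Set X) : Prop :=
  A ∩ B = ∅ ∨ A ⊆ B ∨ B ⊆ A

theorem compat_of_inter_nonempty_imp_subset {X : Type*} {A B : Set X}
    (h : (A ∩ B).Nonempty → B ⊆ A) : Compat A B := by
  rcases (A ∩ B).eq_empty_or_nonempty with hAB | hAB
  · exact Or.inl hAB
  · exact Or.inr (Or.inr (h hAB))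

theorem Set.Subsingleton.compat {X : Type*} {A : Set X} (hA : A.Subsingleton) (B : Set X) :
    Compat A B := by
  rcases (A ∩ B).eq_empty_or_nonempty with hAB | ⟨a, haA, haB⟩
  · exact Or.inl hAB
  · exact Or.inr (Or.inl fun b hb => hA haA hb ▸ haB)

theorem mem_of_cyclic_closed {X : Type*} {c : Set X} {k : ℕ} {x : ℕ → X}
    (hstep : ∀ i, i + 1 < k → x i ∈ c → x (i + 1) ∈ c) (hwrap : x (k - 1) ∈ c → x 0 ∈ c)
    {i : ℕ} (hi : i < k) (hxi : x i ∈ c) {j : ℕ} (hj : j < k) : x j ∈ c := by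
  have forward : ∀ m, x m ∈ c → ∀ n, m ≤ n → n < k → x n ∈ c := by
    intro m hm n hmn
    induction n, hmn using Nat.le_induction with
    | base => exact fun _ => hm
    | succ n _ ih => exact fun hn => hstep n hn (ih (by omega))
  exact forward 0 (hwrap (forward i hxi (k - 1) (by omega) (by omega))) j j.zero_le hj

theorem stmt4_general {X : Type*} (C : Set (Set X))
    (k : ℕ) (x : ℕ → X)
    (hchain : ∀ i, i + 1 < k → Arrow C (x i) (x (i + 1)))
    (hcycle : Arrow C (x (k - 1)) (x 0)) :
    ∀ c ∈ C, Compat c {a : X | ∃ i < k, a = x i} := by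
  intro c hc
  rcases c.subsingleton_or_nontrivial with hsub | hnt
  · exact hsub.compat _
  · apply compat_of_inter_nonempty_imp_subset
    rintro ⟨_, hxc, i, hi, rfl⟩ _ ⟨j, hj, rfl⟩
    exact mem_of_cyclic_closed (fun i hi => hchain i hi c hc hnt) (hcycle c hc hnt) hi hxc hj

/-- If `(x 0, …, x (k-1))` is a sequence of distinct taxa, `k ≥ 2`, with
`x i →_C x (i+1)` for all `i ≤ k - 2` and `x (k-1) →_C x 0`, then the set
`{x 0, …, x (k-1)}` is compatible with `C` (every cluster of `C` is compatible
with it). -/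
theorem stmt4 {X : Type*} (C : Set (Set X))
    (hcl : ∀ c ∈ C, c.Nonempty ∧ c ≠ Set.univ)
    (k : ℕ) (hk : 2 ≤ k) (x : ℕ → X)
    (hinj : ∀ i j, i < k → j < k → x i = x j → i = j)
    (hchain : ∀ i, i + 1 < k → Arrow C (x i) (x (i + 1)))
    (hcycle : Arrow C (x (k - 1)) (x 0)) :
    ∀ c ∈ C, Compat c {a : X | ∃ i < k, a = x i} :=
  stmt4_general C k x hchain hcycle
end

section
/- The union of two ST-sets S1 and S2 with S1 ∩ S2 ≠ ∅ is again an ST-set. -/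
def STSet {X : Type*} (C : Set (Set X)) (S : Set X) : Prop :=
  (∀ c ∈ C, Compat c S) ∧ ∀ c₁ ∈ C, ∀ c₂ ∈ C, Compat (c₁ ∩ S) (c₂ ∩ S)

/-! Every cluster `c` either lies in one of `S₁`, `S₂`, or is disjoint from or contains their
union, because a cluster containing `S₁` meets `S₂` (at a common point) and so cannot be disjoint
from it. Clusters of the last two kinds are trivially compatible with anything after restriction
to `S₁ ∪ S₂`; a cluster inside an ST-set `Sᵢ` is compatible with every cluster outright. -/

section

variable {X : Type*} {C : Set (Set X)} {A B S S₁ S₂ c c₁ c₂ : Set X}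

theorem Compat.inter_right (h : Compat A B) (S : Set X) : Compat (A ∩ S) (B ∩ S) := by
  rcases h with h | h | h
  · left
    rw [Set.inter_inter_inter_comm, h, Set.empty_inter]
  · exact Or.inr (Or.inl (Set.inter_subset_inter_left S h))
  · exact Or.inr (Or.inr (Set.inter_subset_inter_left S h))

theorem STSet.compat_of_subset (hS : STSet C S) (hc₁ : c₁ ∈ C) (hc₂ : c₂ ∈ C) (hsub : c₂ ⊆ S) :
    Compat c₁ c₂ := by
  rcases hS.1 c₁ hc₁ with hdisj | hc₁S | hSc₁
  · left
    exact Set.subset_empty_iff.mp (hdisj ▸ Set.inter_subset_inter_right c₁ hsub)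
  · simpa only [Set.inter_eq_left.mpr hc₁S, Set.inter_eq_left.mpr hsub] using hS.2 c₁ hc₁ c₂ hc₂
  · exact Or.inr (Or.inr (hsub.trans hSc₁))

theorem compat_union_cases (h₁ : Compat c S₁) (h₂ : Compat c S₂) (hmeet : (S₁ ∩ S₂).Nonempty) :
    c ⊆ S₁ ∨ c ⊆ S₂ ∨ c ∩ (S₁ ∪ S₂) = ∅ ∨ S₁ ∪ S₂ ⊆ c := by
  obtain ⟨w, hw₁, hw₂⟩ := hmeet
  rcases h₁ with hd₁ | hc₁ | hS₁
  · rcases h₂ with hd₂ | hc₂ | hS₂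
    · exact Or.inr (Or.inr (Or.inl (by rw [Set.inter_union_distrib_left, hd₁, hd₂, Set.union_self])))
    · exact Or.inr (Or.inl hc₂)
    · exact (Set.eq_empty_iff_forall_notMem.mp hd₁ w ⟨hS₂ hw₂, hw₁⟩).elim
  · exact Or.inl hc₁
  · rcases h₂ with hd₂ | hc₂ | hS₂
    · exact (Set.eq_empty_iff_forall_notMem.mp hd₂ w ⟨hS₁ hw₁, hw₂⟩).elim
    · exact Or.inr (Or.inl hc₂)
    · exact Or.inr (Or.inr (Or.inr (Set.union_subset hS₁ hS₂)))

end

/-- The union of two intersecting ST-sets is again an ST-set. -/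
theorem stmt11 {X : Type*} (C : Set (Set X)) (S₁ S₂ : Set X)
    (h₁ : STSet C S₁) (h₂ : STSet C S₂) (hmeet : (S₁ ∩ S₂).Nonempty) :
    STSet C (S₁ ∪ S₂) := by
  have classify (c : Set X) (hc : c ∈ C) := compat_union_cases (h₁.1 c hc) (h₂.1 c hc) hmeet
  refine ⟨fun c hc => ?_, fun c₁ hc₁ c₂ hc₂ => ?_⟩
  · rcases classify c hc with hc₁ | hc₂ | hdisj | hsup
    · exact Or.inr (Or.inl (hc₁.trans Set.subset_union_left))
    · exact Or.inr (Or.inl (hc₂.trans Set.subset_union_right))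
    · exact Or.inl hdisj
    · exact Or.inr (Or.inr hsup)
  · rcases classify c₂ hc₂ with hsub₁ | hsub₂ | hdisj | hsup
    · exact (h₁.compat_of_subset hc₁ hc₂ hsub₁).inter_right _
    · exact (h₂.compat_of_subset hc₁ hc₂ hsub₂).inter_right _
    · exact Or.inr (Or.inr (by rw [hdisj]; exact Set.empty_subset _))
    · exact Or.inr (Or.inl (by rw [Set.inter_eq_right.mpr hsup]; exact Set.inter_subset_right))
end

section
/- Let C be a set of clusters on X with incompatibility graph IG(C). Then there do not exist two distinct non-trivial connected components C̄ and C̄' of IG(C) (each containing at least two clusters) such that the union of the clusters in C̄ equals the union of the clusters in C̄'. -/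
/-- The connected component of the cluster `c` in the incompatibility graph of
`C`: all clusters of `C` linked to `c` by a chain of pairwise incompatible
clusters of `C`. -/
def IGComponent {X : Type*} (C : Set (Set X)) (c : Set X) : Set (Set X) :=
  {d | d ∈ C ∧ Relation.ReflTransGen
        (fun a b => a ∈ C ∧ b ∈ C ∧ ¬ Compat a b) c d}

/-!
Suppose the components `K₁ ≠ K₂` of `IG(C)` are nontrivial and have the same union `U`.
Clusters in different components are compatible. If some `b ∈ K₂` lay inside some `a ∈ K₁`,
then, walking along incompatible edges of `K₂`, every cluster of `K₂` would lie inside `a`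
(a cluster incompatible with one inside `a` meets `a`, so being compatible with `a` it must
lie inside `a`). Hence `U ⊆ a`, so `a = U` contains its incompatible neighbour in `K₁`,
which is absurd. By symmetry all clusters of `K₁` are disjoint from all clusters of `K₂`,
contradicting `⋃₀ K₁ = ⋃₀ K₂`, which is nonempty since incompatible clusters intersect.
-/

section

variable {X : Type*}

namespace Compat

variable {A B : Set X}

theorem symm (h : Compat A B) : Compat B A := by
  rcases h with h | h | h
  · exact .inl (Set.inter_comm B A ▸ h)
  · exact .inr (.inr h)
  · exact .inr (.inl h)

theorem of_subset (h : B ⊆ A) : Compat A B := .inr (.inr h)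

theorem not_iff : ¬ Compat A B ↔ (A ∩ B).Nonempty ∧ ¬ A ⊆ B ∧ ¬ B ⊆ A := by
  simp only [Compat, not_or, Set.nonempty_iff_ne_empty]

end Compat

theorem subset_of_not_compat_of_compat {a x y : Set X} (hxa : x ⊆ a)
    (hxy : ¬ Compat x y) (hay : Compat a y) : y ⊆ a := by
  obtain ⟨⟨p, hpx, hpy⟩, hnxy, -⟩ := Compat.not_iff.1 hxy
  rcases hay with h | h | h
  · exact (Set.notMem_empty p (h ▸ ⟨hxa hpx, hpy⟩)).elim
  · exact absurd (hxa.trans h) hnxy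
  · exact h

def IGAdj (C : Set (Set X)) (a b : Set X) : Prop :=
  a ∈ C ∧ b ∈ C ∧ ¬ Compat a b

instance (C : Set (Set X)) : Std.Symm (IGAdj C) :=
  ⟨fun _ _ ⟨ha, hb, h⟩ => ⟨hb, ha, fun h' => h h'.symm⟩⟩

namespace IGComponent

variable {C : Set (Set X)} {a b c d : Set X}

theorem mem_iff : d ∈ IGComponent C c ↔ d ∈ C ∧ Relation.ReflTransGen (IGAdj C) c d :=
  Iff.rfl

theorem reflTransGen_symm (h : Relation.ReflTransGen (IGAdj C) a b) :
    Relation.ReflTransGen (IGAdj C) b a :=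
  Std.Symm.symm _ _ h

theorem self_mem (hc : c ∈ C) : c ∈ IGComponent C c :=
  ⟨hc, .refl⟩

theorem eq_of_mem (hd : d ∈ IGComponent C c) : IGComponent C d = IGComponent C c := by
  rw [mem_iff] at hd
  ext e
  simp only [mem_iff]
  exact and_congr_right fun _ => ⟨hd.2.trans, (reflTransGen_symm hd.2).trans⟩

theorem compat_of_ne (hne : IGComponent C a ≠ IGComponent C b)
    (hc : c ∈ IGComponent C a) (hd : d ∈ IGComponent C b) : Compat c d := by
  by_contra hcd
  have hd' : d ∈ IGComponent C a := ⟨hd.1, hc.2.tail ⟨hc.1, hd.1, hcd⟩⟩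
  exact hne ((eq_of_mem hd').symm.trans (eq_of_mem hd))

theorem exists_not_compat (hnt : (IGComponent C c).Nontrivial)
    (ha : a ∈ IGComponent C c) : ∃ a' ∈ IGComponent C c, ¬ Compat a a' := by
  obtain ⟨f, hf, hfa⟩ := hnt.exists_ne a
  rw [mem_iff] at ha hf
  have hpath : Relation.ReflTransGen (IGAdj C) a f := (reflTransGen_symm ha.2).trans hf.2
  rcases hpath.cases_head with rfl | ⟨b, hab, -⟩
  · exact absurd rfl hfa
  · exact ⟨b, ⟨hab.2.1, ha.2.tail hab⟩, hab.2.2⟩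

theorem sUnion_subset_of_forall_compat (hcomp : ∀ b ∈ IGComponent C c, Compat a b)
    (hca : c ⊆ a) : ⋃₀ IGComponent C c ⊆ a := by
  refine Set.sUnion_subset fun d hd => ?_
  induction (mem_iff.1 hd).2 with
  | refl => exact hca
  | @tail x y hcx hxy ih =>
    exact subset_of_not_compat_of_compat (ih ⟨hxy.1, hcx⟩) hxy.2.2
      (hcomp y ⟨hxy.2.1, hcx.tail hxy⟩)

theorem not_subset_of_forall_compat {c₁ c₂ a b : Set X} (hnt : (IGComponent C c₁).Nontrivial)
    (hU : ⋃₀ IGComponent C c₁ = ⋃₀ IGComponent C c₂) (ha : a ∈ IGComponent C c₁)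
    (hb : b ∈ IGComponent C c₂) (hcomp : ∀ b' ∈ IGComponent C c₂, Compat a b') :
    ¬ b ⊆ a := by
  intro hba
  have hUa : ⋃₀ IGComponent C c₁ ⊆ a := by
    rw [hU, ← eq_of_mem hb]
    exact sUnion_subset_of_forall_compat (eq_of_mem hb ▸ hcomp) hba
  obtain ⟨a', ha', hnc⟩ := exists_not_compat hnt ha
  exact hnc (.of_subset ((Set.subset_sUnion_of_mem ha').trans hUa))

theorem disjoint_of_ne {c₁ c₂ a b : Set X} (hne : IGComponent C c₁ ≠ IGComponent C c₂)
    (hnt₁ : (IGComponent C c₁).Nontrivial) (hnt₂ : (IGComponent C c₂).Nontrivial)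
    (hU : ⋃₀ IGComponent C c₁ = ⋃₀ IGComponent C c₂)
    (ha : a ∈ IGComponent C c₁) (hb : b ∈ IGComponent C c₂) : a ∩ b = ∅ := by
  rcases compat_of_ne hne ha hb with h | h | h
  · exact h
  · exact absurd h (not_subset_of_forall_compat hnt₂ hU.symm hb ha
      fun a' ha' => (compat_of_ne hne ha' hb).symm)
  · exact absurd h (not_subset_of_forall_compat hnt₁ hU ha hb
      fun b' hb' => compat_of_ne hne ha hb')

end IGComponent

end

theorem stmt13_general {X : Type*} (C : Set (Set X)) :
    ¬ ∃ c₁ ∈ C, ∃ c₂ ∈ C,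
        IGComponent C c₁ ≠ IGComponent C c₂ ∧
        (IGComponent C c₁).Nontrivial ∧ (IGComponent C c₂).Nontrivial ∧
        ⋃₀ IGComponent C c₁ = ⋃₀ IGComponent C c₂ := by
  rintro ⟨c₁, hc₁, c₂, -, hne, hnt₁, hnt₂, hU⟩
  obtain ⟨a', -, hnc⟩ := IGComponent.exists_not_compat hnt₁ (IGComponent.self_mem hc₁)
  obtain ⟨x, hx, -⟩ := (Compat.not_iff.1 hnc).1
  obtain ⟨b, hb, hxb⟩ := hU ▸ Set.mem_sUnion_of_mem hx (IGComponent.self_mem hc₁)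
  have hdisj := IGComponent.disjoint_of_ne hne hnt₁ hnt₂ hU (IGComponent.self_mem hc₁) hb
  exact Set.notMem_empty x (hdisj ▸ ⟨hx, hxb⟩)

/-- There do not exist two distinct non-trivial connected components of the
incompatibility graph `IG(C)` (each containing at least two clusters) whose
unions of clusters coincide. -/
theorem stmt13 {X : Type*} (C : Set (Set X))
    (hcl : ∀ c ∈ C, c.Nonempty ∧ c ≠ Set.univ) :
    ¬ ∃ c₁ ∈ C, ∃ c₂ ∈ C,
        IGComponent C c₁ ≠ IGComponent C c₂ ∧
        (IGComponent C c₁).Nontrivial ∧ (IGComponent C c₂).Nontrivial ∧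
        ⋃₀ IGComponent C c₁ = ⋃₀ IGComponent C c₂ :=
  stmt13_general C
end

section
/- An r-reticulation generator has at most 3r vertices and at most 4r-1 edges; consequently it has at most 7r-1 sides (edges plus indegree-2 outdegree-0 nodes). -/
/-!
Let `t` be the number of tree nodes (indegree 1). Counting edges by their heads gives
`|E| = t + 2r`, counting them by their tails gives `|E| ≥ 1 + 2t` (the root contributes 1,
each tree node 2). Hence `t ≤ 2r - 1`, so `|V| = 1 + t + r ≤ 3r` and `|E| ≤ 4r - 1`; the
indegree-2 outdegree-0 nodes are among the `r` reticulations, giving `7r - 1` sides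
(indeed even `5r - 1`).
-/

def mindeg {V : Type*} [DecidableEq V] (E : Multiset (V × V)) (v : V) : ℕ :=
  (E.filter (fun e => e.2 = v)).card

def moutdeg {V : Type*} [DecidableEq V] (E : Multiset (V × V)) (v : V) : ℕ :=
  (E.filter (fun e => e.1 = v)).card

def MAcyclic {V : Type*} (E : Multiset (V × V)) : Prop :=
  ∀ v : V, ¬ Relation.TransGen (fun a b => (a, b) ∈ E) v v

open Finset

theorem Multiset.sum_card_filter_eq_card {α β : Type*} [Fintype β] [DecidableEq β]
    (m : Multiset α) (f : α → β) : ∑ b, (m.filter fun a => f a = b).card = m.card := by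
  simpa [Multiset.count_map, eq_comm] using
    Multiset.sum_count_eq_card (s := univ) (m := m.map f) (by simp)

section DegreeSum

variable {V : Type*} [Fintype V] [DecidableEq V] (E : Multiset (V × V))

theorem sum_mindeg : ∑ v, mindeg E v = Multiset.card E :=
  E.sum_card_filter_eq_card Prod.snd

theorem sum_moutdeg : ∑ v, moutdeg E v = Multiset.card E :=
  E.sum_card_filter_eq_card Prod.fst

end DegreeSum

namespace Finset

variable {α : Type*} (s : Finset α) (f : α → ℕ)

theorem card_eq_card_filter_add_of_le_two (hf : ∀ a ∈ s, f a ≤ 2) :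
    #s = #{a ∈ s | f a = 0} + #{a ∈ s | f a = 1} + #{a ∈ s | f a = 2} := by
  rw [card_eq_sum_ones, card_filter, card_filter, card_filter, ← sum_add_distrib,
    ← sum_add_distrib]
  refine sum_congr rfl fun a ha => ?_
  have := hf a ha
  interval_cases f a <;> rfl

theorem sum_eq_card_filter_add_two_mul_of_le_two (hf : ∀ a ∈ s, f a ≤ 2) :
    ∑ a ∈ s, f a = #{a ∈ s | f a = 1} + 2 * #{a ∈ s | f a = 2} := by
  rw [card_filter, card_filter, mul_sum, ← sum_add_distrib]
  refine sum_congr rfl fun a ha => ?_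
  have := hf a ha
  interval_cases f a <;> rfl

theorem card_filter_add_two_mul_le_sum (g : α → ℕ)
    (h0 : ∀ a ∈ s, f a = 0 → 1 ≤ g a) (h1 : ∀ a ∈ s, f a = 1 → 2 ≤ g a) :
    #{a ∈ s | f a = 0} + 2 * #{a ∈ s | f a = 1} ≤ ∑ a ∈ s, g a := by
  rw [card_filter, card_filter, mul_sum, ← sum_add_distrib]
  refine sum_le_sum fun a ha => ?_
  by_cases ha0 : f a = 0
  · simp [ha0, h0 a ha ha0]
  by_cases ha1 : f a = 1
  · simp [ha1, h1 a ha ha1]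
  simp [ha0, ha1]

end Finset

theorem stmt17_general {V : Type*} [Fintype V] [DecidableEq V]
    (E : Multiset (V × V)) (r : ℕ)
    (hroot : ∃! ρ : V, mindeg E ρ = 0)
    (hrootdeg : ∀ ρ : V, mindeg E ρ = 0 → moutdeg E ρ = 1)
    (hdeg : ∀ v : V, mindeg E v ≤ 2)
    (hr' : (Finset.univ.filter (fun v : V => mindeg E v = 2)).card = r)
    (htree : ∀ v : V, mindeg E v = 1 → moutdeg E v = 2) :
    Fintype.card V ≤ 3 * r ∧ Multiset.card E ≤ 4 * r - 1 ∧
    Multiset.card E +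
      (Finset.univ.filter
        (fun v : V => mindeg E v = 2 ∧ moutdeg E v = 0)).card ≤ 7 * r - 1 := by
  have hone_root : #{v | mindeg E v = 0} = 1 := (Fintype.existsUnique_iff_card_one _).mp hroot
  have hcard_V := card_eq_card_filter_add_of_le_two univ (mindeg E) fun v _ => hdeg v
  have hheads := sum_eq_card_filter_add_two_mul_of_le_two univ (mindeg E) fun v _ => hdeg v
  have htails := card_filter_add_two_mul_le_sum univ (mindeg E) (moutdeg E)
    (fun v _ h => (hrootdeg v h).ge) (fun v _ h => (htree v h).ge)
  have hleaves : #{v | mindeg E v = 2 ∧ moutdeg E v = 0} ≤ r :=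
    hr' ▸ card_le_card (monotone_filter_right _ fun _ _ h => h.1)
  rw [card_univ] at hcard_V
  rw [sum_mindeg] at hheads
  rw [sum_moutdeg] at htails
  omega

/-- An `r`-reticulation generator — a directed acyclic multigraph with a
single fake root of indegree 0 and outdegree 1, exactly `r` reticulation
nodes (indegree 2, outdegree at most 1), and all other nodes of indegree 1 and
outdegree 2 — has at most `3r` vertices and at most `4r - 1` edges, and hence
at most `7r - 1` sides (edges together with indegree-2 outdegree-0 nodes). -/
theorem stmt17 {V : Type*} [Fintype V] [DecidableEq V]
    (E : Multiset (V × V)) (r : ℕ) (hr : 1 ≤ r)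
    (hacyc : MAcyclic E)
    (hroot : ∃! ρ : V, mindeg E ρ = 0)
    (hrootdeg : ∀ ρ : V, mindeg E ρ = 0 → moutdeg E ρ = 1)
    (hdeg : ∀ v : V, mindeg E v ≤ 2)
    (hretic : ∀ v : V, mindeg E v = 2 → moutdeg E v ≤ 1)
    (hr' : (Finset.univ.filter (fun v : V => mindeg E v = 2)).card = r)
    (htree : ∀ v : V, mindeg E v = 1 → moutdeg E v = 2) :
    Fintype.card V ≤ 3 * r ∧ Multiset.card E ≤ 4 * r - 1 ∧
    Multiset.card E +
      (Finset.univ.filter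
        (fun v : V => mindeg E v = 2 ∧ moutdeg E v = 0)).card ≤ 7 * r - 1 :=
  stmt17_general E r hroot hrootdeg hdeg hr' htree
end
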